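/- arXiv:1901.06055 — 6 statements merged into one kernel-verified Lean document; each statement's English description precedes it below -/
import Mathlib

section
/- Suppose X is an uncountable, zero-dimensional, Borel subspace of a Polish space. Then s(X) = s(2^ω), where 2^ω denotes the Cantor space. -/
open Cardinal Filter

/-- An open set `U` *splits* `A` if both `A ∩ U` and `A \ U` are infinite. -/
def Splits {X : Type*} (U A : Set X) : Prop := (A ∩ U).Infinite ∧ (A \ U).Infinite

/-- The splitting number of a topological space: the smallest cardinality of a family of
open sets splitting every infinite subset. -/
noncomputable def splittingNumber (X : Type*) [TopologicalSpace X] : Cardinal :=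
  sInf {c : Cardinal | ∃ 𝒰 : Set (Set X), (∀ U ∈ 𝒰, IsOpen U) ∧
    (∀ A : Set X, A.Infinite → ∃ U ∈ 𝒰, Splits U A) ∧ c = #𝒰}

/-- A space is zero-dimensional if it has a basis of clopen sets. -/
def ZeroDimensional (Y : Type*) [TopologicalSpace Y] : Prop :=
  ∃ B : Set (Set Y), (∀ U ∈ B, IsClopen U) ∧ TopologicalSpace.IsTopologicalBasis B

/-!
In a Hausdorff space every infinite set `A` is split by an open set (the infinite Hausdorff
subspace `A` contains two disjoint infinite open sets), so the splitting number is the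
cardinality of an actual splitting family. Such a family pulls back along a
continuous injection, so `s` is monotone under continuous injections. A second countable
zero-dimensional space embeds into `2^ω` through the indicators of a countable clopen basis, and
an uncountable Borel subset of a Polish space contains a continuous injective image of `2^ω`
(perfect set theorem); the two inequalities give the equality.
-/

open Set Topology TopologicalSpace

section SplittingNumber

universe v w

variable {Y : Type v} {Z : Type w} [TopologicalSpace Y] [TopologicalSpace Z]

theorem exists_isOpen_splits [T2Space Z] {A : Set Z} (hA : A.Infinite) :
    ∃ U : Set Z, IsOpen U ∧ Splits U A := by
  have : Infinite A := hA.to_subtype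
  obtain ⟨W, hW_inf, hW_open, hW_disj⟩ := exists_seq_infinite_isOpen_pairwise_disjoint A
  obtain ⟨U, hU, hUW⟩ := isOpen_induced_iff.mp (hW_open 0)
  have hval : ∀ n, ((↑) '' W n : Set Z).Infinite := fun n =>
    (hW_inf n).image Subtype.val_injective.injOn
  refine ⟨U, hU, ?_, (hval 1).mono ?_⟩
  · rw [← Subtype.image_preimage_coe, hUW]
    exact hval 0
  · rintro _ ⟨a, ha, rfl⟩
    refine ⟨a.2, fun haU => ?_⟩
    have ha0 : a ∈ W 0 := hUW ▸ haU
    exact (hW_disj zero_ne_one).le_bot ⟨ha0, ha⟩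

theorem splittingNumber_le {𝒰 : Set (Set Z)} (hopen : ∀ U ∈ 𝒰, IsOpen U)
    (hsplit : ∀ A : Set Z, A.Infinite → ∃ U ∈ 𝒰, Splits U A) : splittingNumber Z ≤ #𝒰 :=
  csInf_le' ⟨𝒰, hopen, hsplit, rfl⟩

theorem exists_splitting_family_mk_eq [T2Space Z] :
    ∃ 𝒰 : Set (Set Z), (∀ U ∈ 𝒰, IsOpen U) ∧
      (∀ A : Set Z, A.Infinite → ∃ U ∈ 𝒰, Splits U A) ∧ #𝒰 = splittingNumber Z := by
  have hne : {c : Cardinal | ∃ 𝒰 : Set (Set Z), (∀ U ∈ 𝒰, IsOpen U) ∧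
      (∀ A : Set Z, A.Infinite → ∃ U ∈ 𝒰, Splits U A) ∧ c = #𝒰}.Nonempty :=
    ⟨_, {U | IsOpen U}, fun _ hU => hU, fun _ hA => exists_isOpen_splits hA, rfl⟩
  obtain ⟨𝒰, hopen, hsplit, hcard⟩ := csInf_mem hne
  exact ⟨𝒰, hopen, hsplit, hcard.symm⟩

theorem lift_splittingNumber_le_of_continuous_of_injective [T2Space Z] {e : Y → Z}
    (hc : Continuous e) (hi : Function.Injective e) :
    lift.{w} (splittingNumber Y) ≤ lift.{v} (splittingNumber Z) := by
  obtain ⟨𝒰, hopen, hsplit, hcard⟩ := exists_splitting_family_mk_eq (Z := Z)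
  have hpull : splittingNumber Y ≤ #(preimage e '' 𝒰) := by
    refine splittingNumber_le ?_ fun A hA => ?_
    · rintro _ ⟨U, hU, rfl⟩
      exact (hopen U hU).preimage hc
    · obtain ⟨U, hU, hU_inter, hU_diff⟩ := hsplit (e '' A) (hA.image hi.injOn)
      refine ⟨e ⁻¹' U, mem_image_of_mem _ hU, ?_, ?_⟩
      · rw [← image_inter_preimage] at hU_inter
        exact hU_inter.of_image
      · rw [← image_sdiff_preimage] at hU_diff
        exact hU_diff.of_image
  calc lift.{w} (splittingNumber Y) ≤ lift.{w} #(preimage e '' 𝒰) := lift_le.mpr hpull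
    _ ≤ lift.{v} #𝒰 := mk_image_le_lift
    _ = lift.{v} (splittingNumber Z) := by rw [hcard]

end SplittingNumber

theorem isInducing_boolIndicator {Z ι : Type*} [TopologicalSpace Z] {W : ι → Set Z}
    (hW : ∀ i, IsClopen (W i)) (hbasis : IsTopologicalBasis (range W)) :
    IsInducing fun z i => (W i).boolIndicator z := by
  have hc : Continuous fun z i => (W i).boolIndicator z :=
    continuous_pi fun i => (continuous_boolIndicator_iff_isClopen _).mpr (hW i)
  refine ⟨le_antisymm (continuous_iff_le_induced.mp hc) ?_⟩
  rw [hbasis.eq_generateFrom]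
  refine le_generateFrom ?_
  rintro _ ⟨i, rfl⟩
  have hpre : W i = (fun z j => (W j).boolIndicator z) ⁻¹' ((fun g : ι → Bool => g i) ⁻¹' {true}) := by
    ext z
    exact (W i).mem_iff_boolIndicator z
  rw [hpre]
  exact isOpen_induced ((isOpen_discrete ({true} : Set Bool)).preimage (continuous_apply i))

theorem ZeroDimensional.exists_isEmbedding_nat_bool {Z : Type*} [TopologicalSpace Z]
    [SecondCountableTopology Z] [T0Space Z] (hZ : ZeroDimensional Z) :
    ∃ f : Z → (ℕ → Bool), IsEmbedding f := by
  obtain ⟨B, hB_clopen, hB⟩ := hZ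
  obtain ⟨C, hCB, hC_count, hC⟩ := hB.exists_countable
  -- `∅` is added so that the basis is nonempty and can be enumerated by `ℕ`.
  obtain ⟨W, hW⟩ := (hC_count.insert ∅).exists_eq_range (insert_nonempty ∅ C)
  have hW_clopen : ∀ n, IsClopen (W n) := by
    intro n
    rcases (hW ▸ mem_range_self n : W n ∈ insert ∅ C) with h | h
    · exact h ▸ isClopen_empty
    · exact hB_clopen _ (hCB h)
  exact ⟨_, (isInducing_boolIndicator hW_clopen (hW ▸ hC.insert_empty)).isEmbedding⟩

theorem MeasurableSet.exists_nat_bool_injection_of_not_countable {P : Type*} [TopologicalSpace P]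
    [PolishSpace P] [MeasurableSpace P] [BorelSpace P] {X : Set P} (hX : MeasurableSet X)
    (hunc : ¬ X.Countable) :
    ∃ f : (ℕ → Bool) → P, range f ⊆ X ∧ Continuous f ∧ Function.Injective f := by
  obtain ⟨t, ht_le, ht_polish, ht_closed, -⟩ := hX.isClopenable
  obtain ⟨f, hf_range, hf_cont, hf_inj⟩ :=
    @IsClosed.exists_nat_bool_injection_of_not_countable P t ht_polish X ht_closed hunc
  exact ⟨f, hf_range, continuous_le_rng ht_le hf_cont, hf_inj⟩

/-- If `X` is an uncountable, zero-dimensional, Borel subspace of a Polish space,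
then `s(X) = s(2^ω)`. -/
theorem stmt1 {P : Type u} [TopologicalSpace P] [PolishSpace P]
    [MeasurableSpace P] [BorelSpace P] (X : Set P)
    (hunc : ¬ X.Countable) (hBorel : MeasurableSet X) (hzd : ZeroDimensional X) :
    splittingNumber X = Cardinal.lift.{u} (splittingNumber (ℕ → Bool)) := by
  obtain ⟨e, he⟩ := hzd.exists_isEmbedding_nat_bool
  obtain ⟨f, hf_range, hf_cont, hf_inj⟩ := hBorel.exists_nat_bool_injection_of_not_countable hunc
  have hle := lift_splittingNumber_le_of_continuous_of_injective he.continuous he.injective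
  have hge := lift_splittingNumber_le_of_continuous_of_injective
    (hf_cont.subtype_mk fun a => hf_range (mem_range_self a))
    (fun a b h => hf_inj (congrArg Subtype.val h))
  rw [lift_uzero] at hle hge
  exact le_antisymm hle hge
end

section
/- The splitting number s(2^ω) of the Cantor space is uncountable, i.e. s(2^ω) ≥ ℵ₁. -/
open Cardinal Filter

/-!
Given countably many sets `U₀, U₁, …` in an infinite set `X`, shrink `X` to a decreasing chain of
infinite sets `A₀ ⊇ A₁ ⊇ ⋯` with `Aₙ₊₁` lying entirely inside or entirely outside `Uₙ`. A
diagonal sequence of distinct points `xₖ ∈ Aₖ` is almost contained in every `Aₙ`, so no `Uₙ` splits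
it. Hence no countable family splits every infinite set, while in a Hausdorff space (such as
`2^ω`) the family of all open sets does: an infinite set has two disjoint infinite relatively open
subsets.
-/

namespace Set

variable {X : Type*}

noncomputable def infiniteSide (S U : Set X) : Set X :=
  open Classical in if (S ∩ U).Infinite then S ∩ U else S \ U

theorem infiniteSide_subset (S U : Set X) : infiniteSide S U ⊆ S := by
  unfold infiniteSide
  split_ifs
  exacts [inter_subset_left, sdiff_subset]

theorem infiniteSide_subset_or_disjoint (S U : Set X) :
    infiniteSide S U ⊆ U ∨ Disjoint (infiniteSide S U) U := by
  unfold infiniteSide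
  split_ifs
  exacts [Or.inl inter_subset_right, Or.inr disjoint_sdiff_left]

theorem Infinite.infiniteSide {S : Set X} (hS : S.Infinite) (U : Set X) :
    (infiniteSide S U).Infinite := by
  unfold Set.infiniteSide
  split_ifs with h
  · exact h
  · rw [← sdiff_inter_self_eq_sdiff, inter_comm]
    exact hS.sdiff (not_infinite.mp h)

theorem exists_infinite_forall_diff_finite_of_antitone {A : ℕ → Set X} (hA : Antitone A)
    (hinf : ∀ n, (A n).Infinite) : ∃ B : Set X, B.Infinite ∧ ∀ n, (B \ A n).Finite := by
  -- choose `(nₖ, xₖ)` with `nₖ` strictly increasing, `xₖ ∈ A nₖ` and the `xₖ` distinct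
  obtain ⟨f, hfA, hf⟩ := exists_seq_of_forall_finset_exists (fun p : ℕ × X => p.2 ∈ A p.1)
    (fun p q => p.1 < q.1 ∧ p.2 ≠ q.2) fun s _ => by
      obtain ⟨x, hxA, hxs⟩ :=
        ((hinf (s.sup Prod.fst + 1)).sdiff (s.finite_toSet.image Prod.snd)).nonempty
      refine ⟨(s.sup Prod.fst + 1, x), hxA, fun p hp => ⟨?_, ?_⟩⟩
      · exact Nat.lt_succ_of_le (Finset.le_sup (f := Prod.fst) hp)
      · rintro rfl; exact hxs ⟨p, hp, rfl⟩
  have hmono : StrictMono fun k => (f k).1 := fun m n h => (hf m n h).1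
  have hmem : ∀ k, (f k).2 ∈ A k := fun k => hA (hmono.id_le k) (hfA k)
  refine ⟨range fun k => (f k).2, infinite_range_of_injective ?_, fun n => ?_⟩
  · exact Function.Injective.of_lt_imp_ne fun m n h => (hf m n h).2
  · refine ((finite_Iio n).image fun k => (f k).2).subset ?_
    rintro _ ⟨⟨k, rfl⟩, hk⟩
    exact ⟨k, not_le.mp fun h => hk (hA h (hmem k)), rfl⟩

theorem not_splits_of_diff_finite {U A B : Set X} (hBA : (B \ A).Finite)
    (hA : A ⊆ U ∨ Disjoint A U) : ¬ Splits U B := by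
  rintro ⟨hin, hout⟩
  rcases hA with hAU | hAU
  · exact hout (hBA.subset (sdiff_subset_sdiff_right hAU))
  · exact hin (hBA.subset fun x hx => ⟨hx.1, fun hxA => disjoint_left.mp hAU hxA hx.2⟩)

theorem Countable.exists_infinite_forall_not_splits [Infinite X] {𝒰 : Set (Set X)}
    (h𝒰 : 𝒰.Countable) : ∃ B : Set X, B.Infinite ∧ ∀ U ∈ 𝒰, ¬ Splits U B := by
  obtain ⟨U, h𝒰U⟩ := countable_iff_exists_subset_range.mp h𝒰
  let A : ℕ → Set X := fun n => Nat.rec univ (fun m S => infiniteSide S (U m)) n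
  have hinf : ∀ n, (A n).Infinite := fun n => by
    induction n with
    | zero => exact infinite_univ
    | succ n ih => exact ih.infiniteSide (U n)
  obtain ⟨B, hB, hBA⟩ := exists_infinite_forall_diff_finite_of_antitone
    (antitone_nat_of_succ_le fun n => infiniteSide_subset (A n) (U n)) hinf
  refine ⟨B, hB, ?_⟩
  rintro _ hU
  obtain ⟨n, rfl⟩ := h𝒰U hU
  exact not_splits_of_diff_finite (hBA (n + 1)) (infiniteSide_subset_or_disjoint (A n) (U n))

theorem Infinite.exists_isOpen_splits [TopologicalSpace X] [T2Space X] {A : Set X}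
    (hA : A.Infinite) : ∃ U, IsOpen U ∧ Splits U A := by
  -- two disjoint infinite relatively open pieces of `A`; one is inside `U`, the other outside
  have : Infinite A := hA.to_subtype
  obtain ⟨V, hVinf, hVopen, hVdisj⟩ := exists_seq_infinite_isOpen_pairwise_disjoint A
  obtain ⟨U, hU, hUV⟩ := isOpen_induced_iff.mp (hVopen 0)
  refine ⟨U, hU, ?_, ?_⟩
  · refine ((hVinf 0).image Subtype.val_injective.injOn).mono ?_
    rintro _ ⟨x, hx, rfl⟩
    exact ⟨x.2, show x ∈ Subtype.val ⁻¹' U from hUV ▸ hx⟩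
  · refine ((hVinf 1).image Subtype.val_injective.injOn).mono ?_
    rintro _ ⟨x, hx, rfl⟩
    exact ⟨x.2, fun hxU => disjoint_left.mp (hVdisj zero_ne_one) (hUV ▸ hxU) hx⟩

end Set

theorem aleph_one_le_splittingNumber (X : Type*) [TopologicalSpace X] [T2Space X] [Infinite X] :
    ℵ₁ ≤ splittingNumber X := by
  refine le_csInf ⟨_, {U | IsOpen U}, fun _ => id, fun A hA => hA.exists_isOpen_splits, rfl⟩ ?_
  rintro _ ⟨𝒰, -, hsplit, rfl⟩
  by_contra h
  have h𝒰 : 𝒰.Countable := le_aleph0_iff_set_countable.mp (lt_aleph_one_iff.mp (not_le.mp h))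
  obtain ⟨B, hB, hnot⟩ := h𝒰.exists_infinite_forall_not_splits
  obtain ⟨U, hU, hUB⟩ := hsplit B hB
  exact hnot U hU hUB

/-- The splitting number of the Cantor space is uncountable. -/
theorem stmt2 : Cardinal.aleph 1 ≤ splittingNumber (ℕ → Bool) :=
  aleph_one_le_splittingNumber _
end

section
/- Let x ∈ ℝ and let A ⊆ ℝ be the set of terms of an injective sequence converging to x with x ∉ A. If U ⊆ ℝ is open and U splits A, then x belongs to the topological boundary ∂U of U. Consequently, if 𝒰 is a family of open subsets of ℝ such that every infinite subset of ℝ is split by some member of 𝒰, then ℝ = ⋃_{U ∈ 𝒰} ∂U. -/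
open Cardinal Filter

/-
A sequence converging to `x` visits each of `U` and its complement infinitely often when `U`
splits its range, so `x` lies in the closure of both. Every real is the limit of a strictly
increasing sequence, whose range is infinite and hence split by some member of the family.
-/

open Set Topology

section

variable {X ι : Type*} [TopologicalSpace X] {g : ι → X} {x : X}

theorem mem_closure_of_infinite_range_inter (hg : Tendsto g cofinite (𝓝 x)) {S : Set X}
    (hS : (range g ∩ S).Infinite) : x ∈ closure S := by
  rw [← image_preimage_eq_range_inter] at hS
  exact mem_closure_of_frequently_of_tendsto
    (frequently_cofinite_iff_infinite.2 (Infinite.of_image g hS)) hg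

theorem Splits.mem_frontier_of_tendsto {U : Set X} (hU : Splits U (range g))
    (hg : Tendsto g cofinite (𝓝 x)) : x ∈ frontier U := by
  rw [frontier_eq_closure_inter_closure]
  exact ⟨mem_closure_of_infinite_range_inter hg hU.1,
    mem_closure_of_infinite_range_inter hg hU.2⟩

end

theorem biUnion_frontier_eq_univ_of_forall_splits {α : Type*} [LinearOrder α]
    [TopologicalSpace α] [OrderTopology α] [FirstCountableTopology α] [DenselyOrdered α]
    [NoMinOrder α] {𝒰 : Set (Set α)} (h𝒰 : ∀ A : Set α, A.Infinite → ∃ U ∈ 𝒰, Splits U A) :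
    ⋃ U ∈ 𝒰, frontier U = Set.univ := by
  refine eq_univ_of_forall fun x => ?_
  obtain ⟨u, hu_mono, -, hu_lim⟩ := exists_seq_strictMono_tendsto x
  obtain ⟨U, hU𝒰, hU⟩ := h𝒰 _ (infinite_range_of_injective hu_mono.injective)
  exact mem_biUnion hU𝒰 (hU.mem_frontier_of_tendsto (Nat.cofinite_eq_atTop ▸ hu_lim))

/-- If `A` is the set of terms of an injective sequence converging to `x ∉ A`, and the open
set `U` splits `A`, then `x ∈ ∂U`. Consequently, if every infinite subset of `ℝ` is split by
a member of the family `𝒰` of open sets, then `ℝ = ⋃_{U ∈ 𝒰} ∂U`. -/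
theorem stmt10 :
    (∀ (x : ℝ) (g : ℕ → ℝ) (A : Set ℝ), Function.Injective g →
      Filter.Tendsto g Filter.atTop (nhds x) → A = Set.range g → x ∉ A →
      ∀ U : Set ℝ, IsOpen U → Splits U A → x ∈ frontier U) ∧
    (∀ 𝒰 : Set (Set ℝ), (∀ U ∈ 𝒰, IsOpen U) →
      (∀ A : Set ℝ, A.Infinite → ∃ U ∈ 𝒰, Splits U A) →
      (⋃ U ∈ 𝒰, frontier U) = Set.univ) := by
  refine ⟨?_, fun 𝒰 _ h𝒰 => biUnion_frontier_eq_univ_of_forall_splits h𝒰⟩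
  rintro x g A - hg rfl - U - hU
  exact hU.mem_frontier_of_tendsto (Nat.cofinite_eq_atTop ▸ hg)
end

section
/- non(𝒩) equals the smallest cardinality of a subset of the Cantor space 2^ω having outer measure 1 with respect to the uniform (coin-flipping) product measure. -/
open Cardinal Filter MeasureTheory

/-- `μ` is the uniform (coin-flipping) product probability measure on the Cantor space
`2^ω`: every basic cylinder determined by `n` coordinates has measure `(1/2)^n`. -/
def IsCantorMeasure (μ : Measure (ℕ → Bool)) : Prop :=
  ∀ (n : ℕ) (s : Fin n → Bool), μ {x | ∀ i : Fin n, x i = s i} = (1 / 2 : ENNReal) ^ n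

/-!
A non-null set `X` is uncountable, since points are null, and countably many translates of `X`
in the group `(ℤ/2)^ω` (in Mathlib, `+` on `ℕ → Bool` is coordinatewise `xor`, coming from the
Boolean ring `Bool`) already have outer measure one. Indeed, let `H` be a measurable hull of `X`.
By Fubini, `∫ μ (K ∩ (H - g)) dg = μ K * μ H`, so some translate of `H` meets any non-null `K` in
a non-null set. Hence a countable family of translates of `H` whose union has maximal measure
covers almost everything, and since translations preserve measurable hulls, the union of the same
translates of `X` has outer measure one and cardinality `#X`.
-/

open Set Measure
open scoped ENNReal

namespace PiNat

variable {E : ℕ → Type*}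

theorem cylinder_inter_cylinder_of_le {x y : ∀ n, E n} {m n : ℕ} (hmn : m ≤ n)
    (h : (cylinder x m ∩ cylinder y n).Nonempty) : cylinder x m ∩ cylinder y n = cylinder y n := by
  obtain ⟨z, hzx, hzy⟩ := h
  rw [inter_eq_right, ← mem_cylinder_iff_eq.1 hzx, ← mem_cylinder_iff_eq.1 hzy]
  exact cylinder_anti z hmn

theorem isPiSystem_cylinders : IsPiSystem {s : Set (∀ n, E n) | ∃ x n, s = cylinder x n} := by
  rintro _ ⟨x, m, rfl⟩ _ ⟨y, n, rfl⟩ h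
  rcases le_total m n with hmn | hnm
  · exact ⟨y, n, cylinder_inter_cylinder_of_le hmn h⟩
  · rw [inter_comm] at h ⊢
    exact ⟨x, m, cylinder_inter_cylinder_of_le hnm h⟩

theorem measurableSpace_eq_generateFrom_cylinders [∀ n, TopologicalSpace (E n)]
    [∀ n, DiscreteTopology (E n)] [∀ n, Countable (E n)] [∀ n, MeasurableSpace (E n)]
    [∀ n, BorelSpace (E n)] :
    (inferInstance : MeasurableSpace (∀ n, E n)) =
      MeasurableSpace.generateFrom {s | ∃ x n, s = cylinder x n} :=
  BorelSpace.measurable_eq.trans (isTopologicalBasis_cylinders E).borel_eq_generateFrom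

theorem preimage_add_left_cylinder [∀ n, AddGroup (E n)] (g x : ∀ n, E n) (n : ℕ) :
    (g + ·) ⁻¹' cylinder x n = cylinder (-g + x) n := by
  ext y
  simp [mem_cylinder_iff, eq_neg_add_iff_add_eq]

end PiNat

namespace IsCantorMeasure

variable {μ : Measure (ℕ → Bool)} (hμ : IsCantorMeasure μ)
include hμ

theorem measure_cylinder (x : ℕ → Bool) (n : ℕ) : μ (PiNat.cylinder x n) = (1 / 2) ^ n := by
  rw [← hμ n (fun i => x i)]
  congr 1
  ext y
  simp [PiNat.mem_cylinder_iff, Fin.forall_iff]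

theorem isProbabilityMeasure : IsProbabilityMeasure μ :=
  ⟨by simpa using hμ.measure_cylinder (fun _ => false) 0⟩

theorem nullSingletonClass : NullSingletonClass μ := by
  refine ⟨fun x => le_antisymm (ge_of_tendsto' (ENNReal.tendsto_pow_atTop_nhds_zero_of_lt_one
    (by norm_num : (1 / 2 : ℝ≥0∞) < 1)) fun n => ?_) zero_le⟩
  rw [← hμ.measure_cylinder x n]
  exact measure_mono (singleton_subset_iff.2 (PiNat.self_mem_cylinder x n))

theorem isAddLeftInvariant : μ.IsAddLeftInvariant := by
  have := hμ.isProbabilityMeasure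
  refine ⟨fun g => ext_of_generate_finite _ PiNat.measurableSpace_eq_generateFrom_cylinders
    PiNat.isPiSystem_cylinders ?_ ?_⟩
  · rintro _ ⟨x, n, rfl⟩
    rw [map_apply (measurable_const_add g) (PiNat.isOpen_cylinder _ x n).measurableSet,
      PiNat.preimage_add_left_cylinder, hμ.measure_cylinder, hμ.measure_cylinder]
  · rw [map_apply (measurable_const_add g) MeasurableSet.univ, preimage_univ]

end IsCantorMeasure

theorem exists_countable_measure_diff_biUnion_eq_zero {α ι : Type*} [MeasurableSpace α]
    (μ : Measure α) [IsFiniteMeasure μ] {s : ι → Set α} (hs : ∀ i, MeasurableSet (s i)) :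
    ∃ T : Set ι, T.Countable ∧ ∀ i, μ (s i \ ⋃ j ∈ T, s j) = 0 := by
  set f : {T : Set ι // T.Countable} → ℝ≥0∞ := fun T => μ (⋃ j ∈ T.1, s j)
  obtain ⟨u, -, hu, hmem⟩ :=
    exists_seq_tendsto_sSup (S := range f) ⟨f ⟨∅, countable_empty⟩, _, rfl⟩
      (OrderTop.bddAbove (range f))
  choose T hT using hmem
  set T₀ : {T : Set ι // T.Countable} := ⟨⋃ n, (T n).1, countable_iUnion fun n => (T n).2⟩
  have hT₀ : f T₀ = sSup (range f) := by
    refine le_antisymm (le_sSup ⟨T₀, rfl⟩) (le_of_tendsto' hu fun n => ?_)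
    rw [← hT n]
    exact measure_mono (biUnion_subset_biUnion_left (subset_iUnion (fun n => (T n).1) n))
  refine ⟨T₀.1, T₀.2, fun i => ?_⟩
  by_contra hi
  set U := ⋃ j ∈ T₀.1, s j
  have hU : MeasurableSet U := .biUnion T₀.2 fun j _ => hs j
  have hgrow : f T₀ < f ⟨insert i T₀.1, T₀.2.insert i⟩ :=
    calc f T₀ < μ U + μ (s i \ U) := ENNReal.lt_add_right (measure_ne_top μ U) hi
      _ = μ (U ∪ s i) := by rw [← measure_union disjoint_sdiff_right ((hs i).diff hU),
          union_sdiff_self]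
      _ = f ⟨insert i T₀.1, T₀.2.insert i⟩ := by simp only [f, biUnion_insert, union_comm]; rfl
  exact hgrow.not_ge (hT₀ ▸ le_sSup ⟨_, rfl⟩)

theorem measure_toMeasurable_diff_eq_zero {α : Type*} [MeasurableSpace α] {μ : Measure α}
    {A E : Set α} (hE : MeasurableSet E) (hAE : A ⊆ E) (hA : μ A ≠ ∞) :
    μ (toMeasurable μ A \ E) = 0 := by
  rw [sdiff_eq, measure_toMeasurable_inter hE.compl hA, ← sdiff_eq, sdiff_eq_empty.2 hAE,
    measure_empty]

section AddGroup

variable {G : Type*} [MeasurableSpace G] [AddGroup G] {μ ν : Measure G}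

theorem lintegral_measure_inter_preimage_add_right [MeasurableAdd₂ G] [SFinite μ] [SFinite ν]
    [ν.IsAddLeftInvariant] {H K : Set G} (hH : MeasurableSet H) (hK : MeasurableSet K) :
    ∫⁻ g, μ (K ∩ (· + g) ⁻¹' H) ∂ν = μ K * ν H := by
  have hshear := measurePreserving_prod_add μ ν
  rw [← prod_prod, ← hshear.measure_preimage (hK.prod hH).nullMeasurableSet,
    prod_apply_symm (hshear.measurable (hK.prod hH))]
  rfl

theorem exists_measure_inter_preimage_add_right_ne_zero [MeasurableAdd₂ G] [SFinite μ]
    [SFinite ν] [ν.IsAddLeftInvariant] {H K : Set G} (hH : MeasurableSet H) (hK : MeasurableSet K)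
    (hK₀ : μ K ≠ 0) (hH₀ : ν H ≠ 0) : ∃ g, μ (K ∩ (· + g) ⁻¹' H) ≠ 0 := by
  by_contra! h
  have := lintegral_measure_inter_preimage_add_right (μ := μ) (ν := ν) hH hK
  simp only [h, lintegral_zero] at this
  exact mul_ne_zero hK₀ hH₀ this.symm

theorem exists_countable_measure_compl_biUnion_preimage_add_right_eq_zero [MeasurableAdd₂ G]
    [IsFiniteMeasure μ] [μ.IsAddLeftInvariant] {H : Set G} (hH : MeasurableSet H) (hH₀ : μ H ≠ 0) :
    ∃ T : Set G, T.Countable ∧ μ (⋃ g ∈ T, (· + g) ⁻¹' H)ᶜ = 0 := by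
  obtain ⟨T, hT, hcover⟩ :=
    exists_countable_measure_diff_biUnion_eq_zero μ fun g => measurable_add_const g hH
  refine ⟨T, hT, ?_⟩
  by_contra hU
  obtain ⟨g, hg⟩ := exists_measure_inter_preimage_add_right_ne_zero hH
    (MeasurableSet.biUnion hT fun g _ => measurable_add_const g hH).compl hU hH₀
  rw [inter_comm, ← sdiff_eq] at hg
  exact hg (hcover g)

theorem measure_biUnion_preimage_add_right_toMeasurable [MeasurableAdd G] [μ.IsAddRightInvariant]
    {X : Set G} (hX : μ X ≠ ∞) {T : Set G} (hT : T.Countable) :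
    μ (⋃ g ∈ T, (· + g) ⁻¹' toMeasurable μ X) = μ (⋃ g ∈ T, (· + g) ⁻¹' X) := by
  set Y := ⋃ g ∈ T, (· + g) ⁻¹' X
  refine le_antisymm ?_ (measure_mono (biUnion_mono subset_rfl fun g _ =>
    preimage_mono (subset_toMeasurable μ X)))
  set E := toMeasurable μ Y
  have hE : MeasurableSet E := measurableSet_toMeasurable μ Y
  have hdiff (g : G) (hg : g ∈ T) : μ ((· + g) ⁻¹' toMeasurable μ X \ E) = 0 := by
    have hXE : X ⊆ (· + -g) ⁻¹' E := fun x hx =>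
      subset_toMeasurable μ Y (mem_biUnion hg (by simpa using hx))
    rw [← measure_preimage_add_right μ (-g), preimage_sdiff, ← preimage_comp]
    simpa [Function.comp_def] using
      measure_toMeasurable_diff_eq_zero (measurable_add_const (-g) hE) hXE hX
  calc μ (⋃ g ∈ T, (· + g) ⁻¹' toMeasurable μ X)
      ≤ μ (E ∪ ⋃ g ∈ T, ((· + g) ⁻¹' toMeasurable μ X \ E)) := by
        refine measure_mono fun x hx => ?_
        by_cases hxE : x ∈ E
        · exact Or.inl hxE
        · obtain ⟨g, hg, hx⟩ := mem_iUnion₂.1 hx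
          exact Or.inr (mem_biUnion hg ⟨hx, hxE⟩)
    _ ≤ μ E + 0 := (measure_union_le _ _).trans_eq (by rw [(measure_biUnion_null_iff hT).2 hdiff])
    _ = μ E := add_zero _
    _ = μ Y := measure_toMeasurable Y

theorem exists_countable_measure_biUnion_preimage_add_right_eq_one [MeasurableAdd₂ G]
    [IsProbabilityMeasure μ] [μ.IsAddLeftInvariant] [μ.IsAddRightInvariant] {X : Set G}
    (hX : μ X ≠ 0) :
    ∃ T : Set G, T.Countable ∧ μ (⋃ g ∈ T, (· + g) ⁻¹' X) = 1 := by
  obtain ⟨T, hT, hcover⟩ := exists_countable_measure_compl_biUnion_preimage_add_right_eq_zero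
    (measurableSet_toMeasurable μ X) (by rwa [measure_toMeasurable])
  refine ⟨T, hT, ?_⟩
  rw [← measure_biUnion_preimage_add_right_toMeasurable (measure_ne_top μ X) hT]
  exact (prob_compl_eq_zero_iff (.biUnion hT fun g _ =>
    measurable_add_const g (measurableSet_toMeasurable μ X))).1 hcover

end AddGroup

theorem Cardinal.mk_biUnion_preimage_add_right_le {G : Type*} [AddGroup G] {X T : Set G}
    (hT : T.Countable) (hX : ℵ₀ ≤ #X) : #(⋃ g ∈ T, (· + g) ⁻¹' X) ≤ #X :=
  calc #(⋃ g ∈ T, (· + g) ⁻¹' X) ≤ #T * ⨆ g : T, #((· + g.1) ⁻¹' X) := mk_biUnion_le _ T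
    _ ≤ ℵ₀ * #X := mul_le_mul' (le_aleph0_iff_set_countable.2 hT)
        (ciSup_le' fun g => mk_preimage_of_injective _ X (add_left_injective g.1))
    _ = #X := aleph0_mul_eq hX

/-- `non(𝒩)` equals the smallest cardinality of a subset of the Cantor space having outer
measure `1` with respect to the uniform product measure. -/
theorem stmt12 (μ : Measure (ℕ → Bool)) (hμ : IsCantorMeasure μ) :
    sInf {c : Cardinal | ∃ X : Set (ℕ → Bool), μ X ≠ 0 ∧ c = #X} =
    sInf {c : Cardinal | ∃ X : Set (ℕ → Bool), μ X = 1 ∧ c = #X} := by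
  have := hμ.isProbabilityMeasure
  have := hμ.isAddLeftInvariant
  have := hμ.nullSingletonClass
  refine le_antisymm (csInf_le_csInf (OrderBot.bddBelow _) ⟨_, univ, measure_univ, rfl⟩ ?_)
    (le_csInf ⟨_, univ, by simp, rfl⟩ ?_)
  · rintro _ ⟨X, hX, rfl⟩
    exact ⟨X, hX ▸ one_ne_zero, rfl⟩
  · rintro _ ⟨X, hX, rfl⟩
    have hX_uncountable : ℵ₀ ≤ #X :=
      (not_le.1 fun h => hX ((le_aleph0_iff_set_countable.1 h).measure_zero μ)).le
    obtain ⟨T, hT, hY⟩ := exists_countable_measure_biUnion_preimage_add_right_eq_one hX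
    refine (csInf_le' ?_).trans (mk_biUnion_preimage_add_right_le hT hX_uncountable)
    exact ⟨_, hY, rfl⟩
end

section
/- Fix an increasing function f : ℕ → ℕ with f(0) ≥ 2. For ζ admissible with dom(ζ) = n and any k with n ≤ k, the number of ζ-available vertices in 2^{[f(k)]} is exactly (1/2 + 1/2^{n+1})·2^{f(k)}. -/
/-- `t` extends `s` (as a function on an initial segment of `ℕ`). -/
def ExtendsStr {m m' : ℕ} (t : Fin m' → Bool) (s : Fin m → Bool) : Prop :=
  ∀ (i : ℕ) (h : i < m) (h' : i < m'), t ⟨i, h'⟩ = s ⟨i, h⟩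

/-- `ζ` (with domain `n`) is admissible for `f`: each `ζ i` is a subset of `2^{[f i]}` of
size `2^{f i − i − 2}` (i.e. a member of `D^f_i`), and for `i < j` no member of `ζ j`
extends a member of `ζ i`. -/
def Admissible (f : ℕ → ℕ) {n : ℕ} (ζ : (i : Fin n) → Finset (Fin (f i) → Bool)) : Prop :=
  (∀ i : Fin n, (ζ i).card = 2 ^ (f i - i - 2)) ∧
  ∀ i j : Fin n, i < j → ∀ s ∈ ζ i, ∀ t ∈ ζ j, ¬ ExtendsStr t s

/-- A vertex `s ∈ 2^{[f k]}` is `ζ`-available if it extends no member of any `ζ i`. -/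
def Available (f : ℕ → ℕ) {n : ℕ} (ζ : (i : Fin n) → Finset (Fin (f i) → Bool))
    {k : ℕ} (s : Fin (f k) → Bool) : Prop :=
  ∀ i : Fin n, ∀ t ∈ ζ i, ¬ ExtendsStr s t

/-! The vertices at level `f k` that are not available form the union, over `i < n`, of the
cones above the members of `ζ i`. Cones above distinct strings of the same length are disjoint,
and admissibility makes cones from different levels disjoint as well. A cone above a string of
length `f i` has `2 ^ (f k - f i)` elements, so level `i` blocks `2 ^ (f k - i - 2)` vertices,
and the geometric sum of these is `(1/2 - 1/2^(n+1)) · 2 ^ f k`. -/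

open Finset

theorem ExtendsStr.eq {m : ℕ} {s t : Fin m → Bool} (h : ExtendsStr t s) : t = s :=
  funext fun i => h i i.2 i.2

theorem ExtendsStr.of_common_extension {m m' M : ℕ} {s : Fin M → Bool} {t : Fin m → Bool}
    {t' : Fin m' → Bool} (ht : ExtendsStr s t) (ht' : ExtendsStr s t') (h : m' ≤ M) :
    ExtendsStr t' t :=
  fun i hi hi' => (ht' i hi' (hi'.trans_le h)).symm.trans (ht i hi _)

section Cone

open Classical in
noncomputable def cone (M : ℕ) {m : ℕ} (t : Fin m → Bool) : Finset (Fin M → Bool) :=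
  univ.filter (ExtendsStr · t)

variable {m M : ℕ}

@[simp]
theorem mem_cone {t : Fin m → Bool} {s : Fin M → Bool} : s ∈ cone M t ↔ ExtendsStr s t := by
  simp [cone]

theorem extendsStr_append (t : Fin m → Bool) {d : ℕ} (g : Fin d → Bool) :
    ExtendsStr (Fin.append t g) t :=
  fun i hi _ => Fin.append_left t g ⟨i, hi⟩

theorem cone_eq_image_append (t : Fin m → Bool) (d : ℕ) :
    cone (m + d) t = univ.image (Fin.append t) := by
  ext s
  simp only [mem_cone, mem_image, mem_univ, true_and]
  constructor
  · intro hs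
    refine ⟨fun j => s (Fin.natAdd m j), ?_⟩
    have hst : (fun i => s (Fin.castAdd d i)) = t := funext fun i => hs i i.2 _
    rw [← hst, Fin.append_castAdd_natAdd]
  · rintro ⟨g, rfl⟩
    exact extendsStr_append t g

theorem card_cone (h : m ≤ M) (t : Fin m → Bool) : #(cone M t) = 2 ^ (M - m) := by
  obtain ⟨d, rfl⟩ := Nat.exists_eq_add_of_le h
  have hinj : Function.Injective (Fin.append t (n := d)) := fun g g' hgg' =>
    funext fun j => by simpa only [Fin.append_right] using congrFun hgg' (Fin.natAdd m j)
  rw [cone_eq_image_append, card_image_of_injective _ hinj]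
  simp

theorem disjoint_cone (h : m ≤ M) {t t' : Fin m → Bool} (hne : t ≠ t') :
    Disjoint (cone M t) (cone M t') :=
  disjoint_left.2 fun _ hs hs' =>
    hne (ExtendsStr.of_common_extension (mem_cone.1 hs') (mem_cone.1 hs) h).eq

theorem card_biUnion_cone (h : m ≤ M) (T : Finset (Fin m → Bool)) :
    #(T.biUnion (cone M)) = #T * 2 ^ (M - m) := by
  rw [card_biUnion fun t _ t' _ hne => disjoint_cone h hne, sum_const_nat fun t _ => card_cone h t]

end Cone

theorem card_available_add_sum (f : ℕ → ℕ) {n k : ℕ} (ζ : (i : Fin n) → Finset (Fin (f i) → Bool))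
    (hle : ∀ i : Fin n, f i ≤ f k)
    (hζ : ∀ i j : Fin n, i < j → ∀ s ∈ ζ i, ∀ t ∈ ζ j, ¬ ExtendsStr t s) :
    Nat.card {s : Fin (f k) → Bool // Available f ζ s} + ∑ i, #(ζ i) * 2 ^ (f k - f i) =
      2 ^ f k := by
  classical
  set B := univ.biUnion fun i => (ζ i).biUnion (cone (f k))
  have hlevels : ∀ i j : Fin n, i < j →
      Disjoint ((ζ i).biUnion (cone (f k))) ((ζ j).biUnion (cone (f k))) := by
    intro i j hij
    simp only [disjoint_left, mem_biUnion, mem_cone, not_exists, not_and]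
    rintro s ⟨t, ht, hst⟩ t' ht' hst'
    exact hζ i j hij t ht t' ht' (hst.of_common_extension hst' (hle j))
  have hB : #B = ∑ i, #(ζ i) * 2 ^ (f k - f i) := by
    rw [card_biUnion fun i _ j _ hne => hne.lt_or_gt.elim (hlevels i j) fun h => (hlevels j i h).symm]
    exact sum_congr rfl fun i _ => card_biUnion_cone (hle i) (ζ i)
  have havail : ∀ s, Available f ζ s ↔ s ∈ Bᶜ := by
    simp [Available, B]
  rw [← hB, Nat.card_eq_fintype_card, Fintype.card_subtype, filter_congr fun s _ => havail s,
    filter_mem_eq_inter, univ_inter, card_compl_add_card, Fintype.card_fun, Fintype.card_bool,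
    Fintype.card_fin]

theorem sum_range_one_div_two_pow_add_two (n : ℕ) :
    ∑ i ∈ range n, (1 : ℚ) / 2 ^ (i + 2) = 1 / 2 - 1 / 2 ^ (n + 1) := by
  induction n with
  | zero => norm_num
  | succ n ih =>
    rw [sum_range_succ, ih]
    field_simp
    ring

/-- Claim: the number of `ζ`-available vertices at level `f k` is exactly
`(1/2 + 1/2^{n+1})·2^{f k}`. -/
theorem stmt16 (f : ℕ → ℕ) (hmono : StrictMono f) (hf0 : 2 ≤ f 0)
    {n : ℕ} (k : ℕ) (hnk : n ≤ k) (ζ : (i : Fin n) → Finset (Fin (f i) → Bool))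
    (hζ : Admissible f ζ) :
    (Nat.card {s : Fin (f k) → Bool // Available f ζ s} : ℚ) =
      (1 / 2 + 1 / 2 ^ (n + 1)) * 2 ^ (f k) := by
  have hle : ∀ i : Fin n, f i ≤ f k := fun i => hmono.monotone (by omega)
  have hlen : ∀ i : Fin n, (i : ℕ) + 2 ≤ f i := fun i => by
    have := hmono.add_le_nat i 0
    simp only [add_zero] at this
    omega
  have hterm : ∀ i : Fin n,
      ((#(ζ i) * 2 ^ (f k - f i) : ℕ) : ℚ) = 2 ^ f k * (1 / 2 ^ ((i : ℕ) + 2)) := fun i => by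
    have := hlen i
    have := hle i
    have hexp : f i - i - 2 + (f k - f i) = f k - (i + 2) := by omega
    rw [hζ.1 i, Nat.cast_mul, Nat.cast_pow, Nat.cast_pow, Nat.cast_ofNat, ← pow_add, hexp,
      pow_sub₀ _ two_ne_zero (by omega), one_div]
  have hcount := congrArg (Nat.cast : ℕ → ℚ) (card_available_add_sum f ζ hle hζ.2)
  rw [Nat.cast_add, Nat.cast_sum, sum_congr rfl fun i _ => hterm i, ← mul_sum,
    Fin.sum_univ_eq_sum_range (fun i => (1 : ℚ) / 2 ^ (i + 2)),
    sum_range_one_div_two_pow_add_two] at hcount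
  push_cast at hcount
  linarith
end

section
/- Fix an increasing function f : ℕ → ℕ with f(0) ≥ 2, and let Ad(k) denote the set of admissible functions with domain k. If n < k and s ∈ 2^{[f(n)]}, then |{ζ ∈ Ad(k) : s ∈ ζ(n)}| = (1/2^{n+2})·|Ad(k)|; in particular this number does not depend on the choice of s. -/
open Finset

abbrev Family (f : ℕ → ℕ) (k : ℕ) : Type := (i : Fin k) → Finset (Fin (f i) → Bool)

section XorTranslation

def xorStr (x : ℕ → Bool) {m : ℕ} (t : Fin m → Bool) : Fin m → Bool :=
  fun i => xor (t i) (x i)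

variable (x : ℕ → Bool)

lemma xorStr_involutive (m : ℕ) : Function.Involutive (xorStr x (m := m)) := by
  intro t; funext i; simp [xorStr]

lemma extendsStr_xorStr_iff {m m' : ℕ} (t : Fin m' → Bool) (s : Fin m → Bool) :
    ExtendsStr (xorStr x t) (xorStr x s) ↔ ExtendsStr t s := by
  simp [ExtendsStr, xorStr]

lemma exists_xorStr_eq {m : ℕ} (s t : Fin m → Bool) : ∃ x : ℕ → Bool, xorStr x s = t :=
  ⟨fun j => if h : j < m then xor (s ⟨j, h⟩) (t ⟨j, h⟩) else false, by funext i; simp [xorStr]⟩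

variable {f : ℕ → ℕ} {k : ℕ}

def xorFamily (ζ : Family f k) : Family f k :=
  fun i => (ζ i).image (xorStr x)

lemma mem_xorFamily {ζ : Family f k} {i : Fin k}
    {u : Fin (f i) → Bool} : u ∈ xorFamily x ζ i ↔ xorStr x u ∈ ζ i := by
  rw [xorFamily, ← xorStr_involutive x _ u, (xorStr_involutive x _).injective.mem_finset_image,
    xorStr_involutive]

lemma xorFamily_involutive : Function.Involutive (xorFamily (f := f) (k := k) x) := by
  intro ζ; funext i; ext u; simp only [mem_xorFamily, xorStr_involutive x _ u]

lemma admissible_xorFamily_iff {ζ : Family f k} :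
    Admissible f (xorFamily x ζ) ↔ Admissible f ζ := by
  have hcard (i : Fin k) : (xorFamily x ζ i).card = (ζ i).card :=
    card_image_of_injective _ (xorStr_involutive x _).injective
  simp only [Admissible, hcard]
  refine and_congr_right fun _ => forall₃_congr fun i j _ => ?_
  rw [(xorStr_involutive x _).surjective.forall]
  refine forall_congr' fun s => ?_
  rw [(xorStr_involutive x _).surjective.forall]
  simp only [mem_xorFamily, xorStr_involutive x _ _, extendsStr_xorStr_iff]
end XorTranslation

section Counting

open scoped Classical

variable (f : ℕ → ℕ) {k : ℕ}

lemma card_admissible_mem_eq (i : Fin k) (s t : Fin (f i) → Bool) :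
    #{ζ : Family f k | Admissible f ζ ∧ s ∈ ζ i} =
      #{ζ : Family f k | Admissible f ζ ∧ t ∈ ζ i} := by
  obtain ⟨x, hx⟩ := exists_xorStr_eq s t
  have hx' : xorStr x t = s := hx ▸ xorStr_involutive x _ s
  refine card_nbij' (xorFamily x) (xorFamily x) ?_ ?_ (fun ζ _ => xorFamily_involutive x ζ)
    (fun ζ _ => xorFamily_involutive x ζ)
  all_goals intro ζ; simp [admissible_xorFamily_iff, mem_xorFamily, hx, hx']

lemma two_pow_mul_card_admissible_mem (i : Fin k) (hi : i + 2 ≤ f i) (s : Fin (f i) → Bool) :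
    2 ^ ((i : ℕ) + 2) * #{ζ : Family f k | Admissible f ζ ∧ s ∈ ζ i} =
      #{ζ : Family f k | Admissible f ζ} := by
  have hdc := card_mul_eq_card_mul (fun (u : Fin (f i) → Bool) (ζ : Family f k) => u ∈ ζ i)
    (s := univ) (t := {ζ | Admissible f ζ})
    (m := #{ζ : Family f k | Admissible f ζ ∧ s ∈ ζ i}) (n := 2 ^ (f i - i - 2))
    (fun u _ => by rw [bipartiteAbove, filter_filter, card_admissible_mem_eq f i u s])
    (fun ζ hζ => by rw [bipartiteBelow, filter_mem_eq_inter, univ_inter, (mem_filter.1 hζ).2.1 i])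
  have hsplit : 2 ^ f i = 2 ^ (f i - i - 2) * 2 ^ ((i : ℕ) + 2) := by
    rw [← pow_add]; congr 1; omega
  rw [card_univ, Fintype.card_fun, Fintype.card_bool, Fintype.card_fin, hsplit, mul_assoc,
    mul_comm #_] at hdc
  exact Nat.eq_of_mul_eq_mul_left (by positivity) hdc

end Counting

/-- Claim: for `n < k` and `s ∈ 2^{[f n]}`, the number of admissible functions `ζ` with
domain `k` such that `s ∈ ζ(n)` is exactly `(1/2^{n+2})·|Ad(k)|`; in particular it does not
depend on `s`. -/
theorem stmt17 (f : ℕ → ℕ) (hmono : StrictMono f) (hf0 : 2 ≤ f 0)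
    (n k : ℕ) (hnk : n < k) (s : Fin (f n) → Bool) :
    (Nat.card {ζ : (i : Fin k) → Finset (Fin (f i) → Bool) //
        Admissible f ζ ∧ s ∈ ζ ⟨n, hnk⟩} : ℚ) =
      (1 / 2 ^ (n + 2)) *
        Nat.card {ζ : (i : Fin k) → Finset (Fin (f i) → Bool) // Admissible f ζ} := by
  classical
  have hfn : n + 2 ≤ f n := by have := hmono.add_le_nat n 0; rw [add_zero] at this; omega
  rw [Nat.card_eq_fintype_card, Fintype.card_subtype, Nat.card_eq_fintype_card,
    Fintype.card_subtype, ← two_pow_mul_card_admissible_mem f ⟨n, hnk⟩ hfn s]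
  push_cast
  field_simp
end
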